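/- arXiv:2512.18214 — 3 statements merged into one kernel-verified Lean document; each statement's English description precedes it below -/
import Mathlib

section
/- Define F(n, k) = f_{2k}·(ℓ_{2n} - 2) - f_{2n}·(ℓ_{2k} - 2) as an integer. Then for all n ≥ 2, F(n, 2) = 2·(ℓ_{2n-2} - 3). -/
def lucas : ℕ → ℕ
  | 0 => 2
  | 1 => 1
  | n + 2 => lucas (n + 1) + lucas n

def F (n k : ℕ) : ℤ :=
  (Nat.fib (2 * k) : ℤ) * ((lucas (2 * n) : ℤ) - 2) -
    (Nat.fib (2 * n) : ℤ) * ((lucas (2 * k) : ℤ) - 2)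

lemma key : ∀ k, 3 * lucas (k + 4) = 5 * Nat.fib (k + 4) + 2 * lucas (k + 2)
  | 0 => by decide
  | 1 => by decide
  | k + 2 => by
    have h1 := key k
    have h2 := key (k + 1)
    simp only [show k + 1 + 4 = k + 5 from by omega, show k + 1 + 2 = k + 3 from by omega,
      show k + 2 + 4 = k + 6 from by omega, show k + 2 + 2 = k + 4 from by omega,
      show k + 4 + 1 = k + 5 from by omega] at *
    have e1 : lucas (k + 6) = lucas (k + 5) + lucas (k + 4) := by
      rw [show k + 6 = (k + 4) + 2 from rfl, lucas]
    have e2 : Nat.fib (k + 6) = Nat.fib (k + 5) + Nat.fib (k + 4) := by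
      rw [show k + 6 = (k + 4) + 2 from rfl, Nat.fib_add_two, show k + 4 + 1 = k + 5 from by omega, Nat.add_comm (Nat.fib (k+4))]
    have e3 : lucas (k + 4) = lucas (k + 3) + lucas (k + 2) := by
      rw [show k + 4 = (k + 2) + 2 from rfl, lucas]
    omega

theorem F_two (n : ℕ) (hn : 2 ≤ n) : F n 2 = 2 * ((lucas (2 * n - 2) : ℤ) - 3) := by
  obtain ⟨m, rfl⟩ : ∃ m, n = m + 2 := ⟨n - 2, by omega⟩
  have h := key (2 * m)
  unfold F
  rw [show 2 * (m + 2) = 2 * m + 4 from by ring, show 2 * m + 4 - 2 = 2 * m + 2 from by omega]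
  have hl : (lucas (2 * 2) : ℤ) = 7 := by norm_num [lucas, show (4:ℕ) = 2 + 2 from rfl]
  have hf : (Nat.fib (2 * 2) : ℤ) = 3 := by norm_num
  rw [hl, hf]
  have h' : (3 : ℤ) * lucas (2 * m + 4) = 5 * Nat.fib (2 * m + 4) + 2 * lucas (2 * m + 2) := by
    exact_mod_cast congrArg (Nat.cast : ℕ → ℤ) h
  linarith
end

section
/- For all n ≥ 1 and 1 ≤ k, the rational expression (f_{2n}²/(f_{4n} - 2f_{2n}))·(2 - f_{4k}/f_{2k}) + f_{2k}, multiplied by (ℓ_{2n} - 2), equals f_{2k}·(ℓ_{2n} - 2) - f_{2n}·(ℓ_{2k} - 2). -/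
lemma lucas_add_fib (m : ℕ) : lucas m + Nat.fib m = 2 * Nat.fib (m + 1) := by
  induction m using Nat.twoStepInduction with
  | zero => simp [lucas]
  | one => simp [lucas]
  | more m ih1 ih2 =>
      have h1 : Nat.fib (m + 2) = Nat.fib m + Nat.fib (m + 1) := Nat.fib_add_two
      have h2 : Nat.fib (m + 3) = Nat.fib (m + 1) + Nat.fib (m + 2) := Nat.fib_add_two
      simp only [lucas, h1, h2] at *
      omega

lemma fib_two_mul' (m : ℕ) : Nat.fib (2 * m) = Nat.fib m * lucas m := by
  have h := Nat.fib_two_mul m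
  have h2 := lucas_add_fib m
  have h3 : Nat.fib m ≤ 2 * Nat.fib (m + 1) := by
    have := Nat.fib_le_fib_succ (n := m)
    omega
  rw [h]
  have : 2 * Nat.fib (m + 1) - Nat.fib m = lucas m := by omega
  rw [this]

lemma three_le_lucas_pair (m : ℕ) : 3 ≤ lucas m + lucas (m + 1) := by
  induction m with
  | zero => simp [lucas]
  | succ m ih => simp only [lucas] at *; omega

lemma three_le_lucas (m : ℕ) (hm : 2 ≤ m) : 3 ≤ lucas m := by
  obtain ⟨j, rfl⟩ : ∃ j, m = j + 2 := ⟨m - 2, by omega⟩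
  have := three_le_lucas_pair j
  simp only [lucas]
  omega

theorem resistance_to_forest_count (n k : ℕ) (hn : 1 ≤ n) (hk : 1 ≤ k) :
    (((Nat.fib (2 * n) : ℚ) ^ 2 / ((Nat.fib (4 * n) : ℚ) - 2 * Nat.fib (2 * n))) *
          (2 - (Nat.fib (4 * k) : ℚ) / (Nat.fib (2 * k) : ℚ)) + (Nat.fib (2 * k) : ℚ)) *
        ((lucas (2 * n) : ℚ) - 2) =
      (Nat.fib (2 * k) : ℚ) * ((lucas (2 * n) : ℚ) - 2) -
        (Nat.fib (2 * n) : ℚ) * ((lucas (2 * k) : ℚ) - 2) := by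
  have h4n : Nat.fib (4 * n) = Nat.fib (2 * n) * lucas (2 * n) := by
    rw [show 4 * n = 2 * (2 * n) by ring, fib_two_mul' (2 * n)]
  have h4k : Nat.fib (4 * k) = Nat.fib (2 * k) * lucas (2 * k) := by
    rw [show 4 * k = 2 * (2 * k) by ring, fib_two_mul' (2 * k)]
  have hfn : 0 < Nat.fib (2 * n) := Nat.fib_pos.mpr (by omega)
  have hfk : 0 < Nat.fib (2 * k) := Nat.fib_pos.mpr (by omega)
  have hln : 3 ≤ lucas (2 * n) := three_le_lucas _ (by omega)
  have hfnQ : (Nat.fib (2 * n) : ℚ) ≠ 0 := by exact_mod_cast hfn.ne'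
  have hfkQ : (Nat.fib (2 * k) : ℚ) ≠ 0 := by exact_mod_cast hfk.ne'
  have hlnQ : (lucas (2 * n) : ℚ) - 2 ≠ 0 := by
    have : (3 : ℚ) ≤ (lucas (2 * n) : ℚ) := by exact_mod_cast hln
    linarith
  rw [h4n, h4k]
  push_cast
  have hden : (Nat.fib (2 * n) : ℚ) * (lucas (2 * n) : ℚ) - 2 * Nat.fib (2 * n) ≠ 0 := by
    rw [show (Nat.fib (2 * n) : ℚ) * (lucas (2 * n) : ℚ) - 2 * Nat.fib (2 * n)
        = Nat.fib (2 * n) * ((lucas (2 * n) : ℚ) - 2) by ring]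
    exact mul_ne_zero hfnQ hlnQ
  field_simp
  ring
end

section
/- The number of spanning trees of the fan graph F_{n+1} (hub vertex joined to every vertex of a path on n vertices) equals f_{2n}, the Fibonacci number of index 2n. -/
/-!
Rooting a spanning tree at a vertex `r` and sending every other vertex to its neighbour on the
way to `r` identifies spanning trees with parent maps: maps sending each vertex `v ≠ r` to a
neighbour, such that iterating them always reaches `r`.

Rooted at the hub of the fan, a parent map lets each path vertex point at the hub, at its left
or at its right neighbour, and iteration fails to reach the hub exactly when two consecutive
vertices point at each other. Let `a_n` count these words of length `n`, and `b_n` those where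
the first vertex may also point left. Splitting by the first letter gives, for `n ≥ 1`,
`a_{n+1} = b_n + a_n` and `b_{n+1} = 2 b_n + a_n`, whence `a_n = f_{2n}` and `b_n = f_{2n+1}`.
-/

def fanGraph (n : ℕ) : SimpleGraph (Option (Fin n)) :=
  SimpleGraph.fromRel
    (fun a b => a = none ∨ ∃ i j : Fin n, a = some i ∧ b = some j ∧ (i : ℕ) + 1 = (j : ℕ))

lemma Nat.card_subtype_ne_add_one {V : Type*} [Finite V] (r : V) :
    Nat.card {v // v ≠ r} + 1 = Nat.card V := by
  have := Fintype.ofFinite V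
  classical
  rw [Nat.card_eq_fintype_card, Nat.card_eq_fintype_card, Fintype.card_subtype_compl,
    Fintype.card_subtype_eq]
  have := Fintype.card_pos_iff.2 ⟨r⟩
  omega

namespace SimpleGraph

variable {V : Type*}

/-- The rank `μ` witnesses that iterating `p` from any vertex reaches the root `r`. -/
structure IsParentMap (G : SimpleGraph V) (r : V) (p : V → V) : Prop where
  map_root : p r = r
  adj : ∀ v ≠ r, G.Adj v (p v)
  exists_rank : ∃ μ : V → ℕ, ∀ v ≠ r, μ (p v) < μ v

def parentGraph (p : V → V) : SimpleGraph V := fromRel fun u v => p u = v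

variable {G T : SimpleGraph V} {r : V} {p q : V → V}

lemma parentGraph_adj {u v : V} : (parentGraph p).Adj u v ↔ u ≠ v ∧ (p u = v ∨ p v = u) :=
  fromRel_adj _ _ _

lemma parentGraph_adj_apply {v : V} (h : p v ≠ v) : (parentGraph p).Adj v (p v) :=
  parentGraph_adj.2 ⟨h.symm, Or.inl rfl⟩

namespace IsParentMap

lemma apply_apply_ne (hp : G.IsParentMap r p) {v : V} (hv : v ≠ r) : p (p v) ≠ v := by
  obtain ⟨μ, hμ⟩ := hp.exists_rank
  intro h
  by_cases hpv : p v = r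
  · exact hv (by rw [← h, hpv, hp.map_root])
  · have := hμ _ hpv
    rw [h] at this
    exact (hμ v hv).not_gt this

lemma parentGraph_le (hp : G.IsParentMap r p) : parentGraph p ≤ G := by
  have key : ∀ {u v}, u ≠ v → p u = v → G.Adj u v := by
    rintro u v hne rfl
    exact hp.adj u fun hu => hne (by rw [hu, hp.map_root])
  rintro u v ⟨hne, h | h⟩
  · exact key hne h
  · exact (key hne.symm h).symm

lemma mono (hp : G.IsParentMap r p) (h : G ≤ T) : T.IsParentMap r p :=
  ⟨hp.map_root, fun v hv => h (hp.adj v hv), hp.exists_rank⟩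

lemma reachable (hp : G.IsParentMap r p) (v : V) : (parentGraph p).Reachable v r := by
  obtain ⟨μ, hμ⟩ := hp.exists_rank
  induction v using (measure μ).wf.induction with
  | _ v ih =>
    by_cases hv : v = r
    · rw [hv]
    · exact (parentGraph_adj_apply (hp.adj v hv).ne.symm).reachable.trans (ih _ (hμ v hv))

lemma connected (hp : G.IsParentMap r p) : (parentGraph p).Connected :=
  have : Nonempty V := ⟨r⟩
  ⟨fun u v => (hp.reachable u).trans (hp.reachable v).symm⟩

/-- The edges are the `s(v, p v)` with `v ≠ r`, pairwise distinct since `p` has no 2-cycles. -/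
lemma card_edgeSet_add_one [Finite V] (hp : G.IsParentMap r p) :
    Nat.card (parentGraph p).edgeSet + 1 = Nat.card V := by
  have hne : ∀ v ≠ r, p v ≠ v := fun v hv => (hp.adj v hv).ne.symm
  let e : {v // v ≠ r} → (parentGraph p).edgeSet := fun v =>
    ⟨s(v.1, p v.1), parentGraph_adj_apply (hne v.1 v.2)⟩
  have he : Function.Bijective e := by
    constructor
    · rintro ⟨v, hv⟩ ⟨w, hw⟩ h
      rcases Sym2.eq_iff.1 (congrArg Subtype.val h) with ⟨hvw, -⟩ | ⟨hvw, hpvw⟩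
      · exact Subtype.ext hvw
      · simp only at hvw hpvw
        exact absurd (by rw [hpvw, hvw]) (hp.apply_apply_ne hv)
    · rintro ⟨x, hx⟩
      induction x with
      | _ u v =>
        rw [mem_edgeSet] at hx
        obtain ⟨huv, h | h⟩ := parentGraph_adj.1 hx
        · refine ⟨⟨u, fun hu => huv ?_⟩, Subtype.ext (by simp [e, h])⟩
          rw [← h, hu, hp.map_root]
        · refine ⟨⟨v, fun hv => huv ?_⟩, Subtype.ext (by simp [e, h, Sym2.eq_swap])⟩
          rw [← h, hv, hp.map_root]
  rw [← Nat.card_eq_of_bijective e he, Nat.card_subtype_ne_add_one]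

lemma isTree [Finite V] (hp : G.IsParentMap r p) : (parentGraph p).IsTree :=
  isTree_iff_connected_and_card.2 ⟨hp.connected, hp.card_edgeSet_add_one⟩

/-- If `p` and `q` disagree at `v`, the edge `s(v, p v)` of the common graph must be
`s(p v, q (p v))`, so they also disagree at `p v`; this cannot go on forever. -/
lemma eq_of_parentGraph_eq (hp : G.IsParentMap r p) (hq : q r = r)
    (h : parentGraph p = parentGraph q) : p = q := by
  obtain ⟨μ, hμ⟩ := hp.exists_rank
  have step : ∀ v, p v ≠ q v → v ≠ r ∧ p (p v) ≠ q (p v) := by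
    intro v hv
    have hvr : v ≠ r := fun hvr => hv (by rw [hvr, hp.map_root, hq])
    have hadj := parentGraph_adj_apply (hp.adj v hvr).ne.symm
    rw [h] at hadj
    obtain ⟨-, h' | h'⟩ := parentGraph_adj.1 hadj
    · exact absurd h'.symm hv
    · exact ⟨hvr, by rw [h']; exact hp.apply_apply_ne hvr⟩
  funext v
  induction v using (measure μ).wf.induction with
  | _ v ih =>
    by_contra hv
    obtain ⟨hvr, hpv⟩ := step v hv
    exact hpv (ih _ (hμ v hvr))

end IsParentMap

lemma Connected.exists_adj_dist_lt (hG : G.Connected) {v : V} (hv : v ≠ r) :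
    ∃ w, G.Adj v w ∧ G.dist w r < G.dist v r := by
  obtain ⟨p, hp⟩ := hG.exists_walk_length_eq_dist v r
  cases p with
  | nil => exact absurd rfl hv
  | cons hadj q =>
    refine ⟨_, hadj, ?_⟩
    have := dist_le q
    simp only [Walk.length_cons] at hp
    omega

lemma Connected.exists_isParentMap (hG : G.Connected) (r : V) : ∃ p, G.IsParentMap r p := by
  classical
  choose! f hadj hlt using fun v (hv : v ≠ r) => hG.exists_adj_dist_lt hv
  refine ⟨Function.update f r r, Function.update_self .., fun v hv => ?_,
    fun w => G.dist w r, fun v hv => ?_⟩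
  · rw [Function.update_of_ne hv]
    exact hadj v hv
  · simp only [Function.update_of_ne hv]
    exact hlt v hv

lemma IsTree.parentGraph_eq (hT : T.IsTree) (hp : T.IsParentMap r p) : parentGraph p = T :=
  (isTree_iff_minimal_connected.1 hT).eq_of_le hp.connected hp.parentGraph_le

theorem card_isTree_le_eq_card_isParentMap [Finite V] (G : SimpleGraph V) (r : V) :
    Nat.card {T : SimpleGraph V // T ≤ G ∧ T.IsTree} = Nat.card {p // G.IsParentMap r p} := by
  refine (Nat.card_eq_of_bijective (fun p => ⟨parentGraph p.1, p.2.parentGraph_le, p.2.isTree⟩)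
    ⟨fun p q h => Subtype.ext ?_, ?_⟩).symm
  · exact p.2.eq_of_parentGraph_eq q.2.map_root (congrArg Subtype.val h)
  · rintro ⟨T, hTG, hT⟩
    obtain ⟨p, hp⟩ := hT.connected.exists_isParentMap r
    exact ⟨⟨p, hp.mono hTG⟩, Subtype.ext (hT.parentGraph_eq hp)⟩

lemma Subgraph.IsSpanning.coe_isTree_iff {H : G.Subgraph} (hH : H.IsSpanning) :
    H.coe.IsTree ↔ H.spanningCoe.IsTree :=
  (H.spanningCoeEquivCoeOfSpanning hH).isTree_iff.symm

theorem card_isSpanning_isTree_eq_card_isTree_le (G : SimpleGraph V) :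
    Nat.card {H : G.Subgraph // H.IsSpanning ∧ H.coe.IsTree} =
      Nat.card {T : SimpleGraph V // T ≤ G ∧ T.IsTree} := by
  refine Nat.card_eq_of_bijective (fun H => ⟨H.1.spanningCoe, H.1.spanningCoe_le,
    H.2.1.coe_isTree_iff.1 H.2.2⟩) ⟨?_, ?_⟩
  · rintro ⟨H, hH, _⟩ ⟨H', hH', _⟩ h
    exact Subtype.ext (Subgraph.ext (hH.verts_eq_univ.trans hH'.verts_eq_univ.symm)
      (Subgraph.spanningCoe_inj.1 (congrArg Subtype.val h)))
  · rintro ⟨T, hTG, hT⟩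
    have hspan := toSubgraph.isSpanning T hTG
    exact ⟨⟨toSubgraph T hTG, hspan, hspan.coe_isTree_iff.2 hT⟩, rfl⟩

end SimpleGraph

lemma Nat.card_subtype_fin_succ {α : Type*} {n : ℕ} (P : (Fin (n + 1) → α) → Prop) :
    Nat.card {s // P s} = Nat.card (Σ a, {t : Fin n → α // P (Fin.cons a t)}) :=
  Nat.card_congr <| ((Fin.consEquiv fun _ => α).symm.subtypeEquiv fun s => by simp).trans
    (Equiv.subtypeProdEquivSigmaSubtype fun a t => P (Fin.cons a t))

inductive FanDir
  | hub | left | right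
  deriving DecidableEq

namespace FanDir

instance : Fintype FanDir := ⟨{hub, left, right}, fun d => by cases d <;> simp⟩

lemma card_sigma (β : FanDir → Type*) [∀ d, Finite (β d)] :
    Nat.card (Σ d, β d) = Nat.card (β hub) + Nat.card (β left) + Nat.card (β right) := by
  rw [Nat.card_sigma]
  change ∑ d ∈ {hub, left, right}, _ = _
  simp [add_assoc]

end FanDir

open FanDir

section Fan

variable {n : ℕ}

/-- An impossible direction points `some i` back at itself, which is not adjacent to it. -/
def fanStep : FanDir → Fin n → Option (Fin n)
  | hub, _ => none
  | left, i => if 0 < (i : ℕ) then some ⟨i - 1, by omega⟩ else some i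
  | right, i => if h : (i : ℕ) + 1 < n then some ⟨i + 1, h⟩ else some i

def fanParent (s : Fin n → FanDir) : Option (Fin n) → Option (Fin n)
  | none => none
  | some i => fanStep (s i) i

/-- `closed = false` lets `some 0` point left too, as it may in the tail of a code whose head
does not point right. -/
def IsFanCode (closed : Bool) (s : Fin n → FanDir) : Prop :=
  (∀ i, s i = right → (i : ℕ) + 1 < n) ∧
  (closed → ∀ i, s i = left → 0 < (i : ℕ)) ∧
  ∀ i j, s i = right → s j = left → (i : ℕ) + 1 ≠ j

lemma fanGraph_adj_some_none (i : Fin n) : (fanGraph n).Adj (some i) none := by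
  simp [fanGraph]

lemma fanGraph_adj_some_some {i j : Fin n} :
    (fanGraph n).Adj (some i) (some j) ↔ (j : ℕ) + 1 = i ∨ (i : ℕ) + 1 = j := by
  simp only [fanGraph, exists_and_left, SimpleGraph.fromRel_adj, ne_eq, Option.some.injEq,
    reduceCtorEq, exists_eq_left', false_or]
  rw [Fin.ext_iff]
  omega

lemma fanStep_left {i j : Fin n} (h : (j : ℕ) + 1 = i) : fanStep left i = some j := by
  simp only [fanStep, show 0 < (i : ℕ) by omega, ↓reduceIte, Option.some.injEq, Fin.ext_iff]
  omega

lemma fanStep_right {i j : Fin n} (h : (i : ℕ) + 1 = j) : fanStep right i = some j := by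
  simp [fanStep, h]

lemma fanGraph_adj_fanStep {d : FanDir} {i : Fin n} :
    (fanGraph n).Adj (some i) (fanStep d i) ↔
      (d = left → 0 < (i : ℕ)) ∧ (d = right → (i : ℕ) + 1 < n) := by
  cases d <;> simp only [fanStep]
  · simp [fanGraph_adj_some_none]
  all_goals split_ifs <;> simp [fanGraph_adj_some_some] <;> omega

lemma exists_fanStep_eq {i : Fin n} {v : Option (Fin n)} (h : (fanGraph n).Adj (some i) v) :
    ∃ d, fanStep d i = v := by
  cases v with
  | none => exact ⟨hub, rfl⟩
  | some j =>
    rcases fanGraph_adj_some_some.1 h with h | h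
    exacts [⟨left, fanStep_left h⟩, ⟨right, fanStep_right h⟩]

lemma fanStep_inj {d d' : FanDir} {i : Fin n} (hd : (fanGraph n).Adj (some i) (fanStep d i))
    (hd' : (fanGraph n).Adj (some i) (fanStep d' i)) (h : fanStep d i = fanStep d' i) :
    d = d' := by
  rw [fanGraph_adj_fanStep] at hd hd'
  cases d <;> cases d' <;> simp_all [fanStep, Fin.ext_iff]
  all_goals omega

lemma isFanCode_cons_hub (b : Bool) (t : Fin n → FanDir) :
    IsFanCode b (Fin.cons hub t) ↔ IsFanCode false t := by
  simp [IsFanCode, Fin.forall_fin_succ]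

lemma isFanCode_cons_left (b : Bool) (t : Fin n → FanDir) :
    IsFanCode b (Fin.cons left t) ↔ b = false ∧ IsFanCode false t := by
  simp [IsFanCode, Fin.forall_fin_succ, and_left_comm]

lemma isFanCode_cons_right (b : Bool) (t : Fin n → FanDir) :
    IsFanCode b (Fin.cons right t) ↔ n ≠ 0 ∧ IsFanCode true t := by
  simp [IsFanCode, Fin.forall_fin_succ, Nat.pos_iff_ne_zero, @eq_comm ℕ 0, and_assoc]

lemma card_isFanCode_zero (b : Bool) : Nat.card {s : Fin 0 → FanDir // IsFanCode b s} = 1 := by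
  have h (s : Fin 0 → FanDir) : IsFanCode b s :=
    ⟨fun i => i.elim0, fun _ i => i.elim0, fun i => i.elim0⟩
  rw [Nat.card_congr (Equiv.subtypeUnivEquiv h), Nat.card_unique]

lemma card_isFanCode_succ (b : Bool) :
    Nat.card {s : Fin (n + 1) → FanDir // IsFanCode b s} =
      Nat.card {t : Fin n → FanDir // IsFanCode false t} +
      (if b then 0 else Nat.card {t : Fin n → FanDir // IsFanCode false t}) +
      (if n = 0 then 0 else Nat.card {t : Fin n → FanDir // IsFanCode true t}) := by
  simp only [Nat.card_subtype_fin_succ, FanDir.card_sigma, isFanCode_cons_hub,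
    isFanCode_cons_left, isFanCode_cons_right]
  congr 2
  · cases b <;> simp
  · split_ifs <;> simp_all

theorem card_isFanCode (n : ℕ) :
    Nat.card {s : Fin (n + 1) → FanDir // IsFanCode true s} = Nat.fib (2 * n + 2) ∧
    Nat.card {s : Fin (n + 1) → FanDir // IsFanCode false s} = Nat.fib (2 * n + 3) := by
  induction n with
  | zero => simp [card_isFanCode_succ, card_isFanCode_zero, Nat.fib_add_two]
  | succ n ih =>
    have h₁ : Nat.fib (2 * (n + 1) + 2) = Nat.fib (2 * n + 2) + Nat.fib (2 * n + 3) :=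
      Nat.fib_add_two
    have h₂ : Nat.fib (2 * (n + 1) + 3) = Nat.fib (2 * n + 3) + Nat.fib (2 * (n + 1) + 2) :=
      Nat.fib_add_two
    constructor <;> rw [card_isFanCode_succ, ih.1, ih.2] <;>
      simp only [Bool.false_eq_true, ↓reduceIte, add_zero, Nat.add_eq_zero_iff, one_ne_zero,
        and_false] <;> omega

def fanRank (s : Fin n → FanDir) : Option (Fin n) → ℕ
  | none => 0
  | some i =>
    match s i with
    | hub => 1
    | left => i + 2
    | right => n + 2 - i

/-- A left pointer never points at a right pointer, nor vice versa: that would be a 2-cycle. -/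
lemma fanRank_fanParent_lt {s : Fin n → FanDir} (hs : IsFanCode true s) (i : Fin n) :
    fanRank s (fanParent s (some i)) < fanRank s (some i) := by
  obtain ⟨hright, hleft, hcycle⟩ := hs
  cases hsi : s i with
  | hub => simp [fanParent, fanStep, fanRank, hsi]
  | left =>
    have hi := hleft rfl i hsi
    obtain ⟨j, hj⟩ : ∃ j : Fin n, (j : ℕ) + 1 = i :=
      ⟨⟨i - 1, by omega⟩, Nat.sub_add_cancel hi⟩
    simp only [fanParent, hsi, fanStep_left hj]
    cases hsj : s j with
    | right => exact absurd hj (hcycle j i hsj hsi)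
    | _ => simp only [fanRank, hsi, hsj]; omega
  | right =>
    have hi := hright i hsi
    simp only [fanParent, hsi, fanStep_right (j := ⟨i + 1, hi⟩) rfl]
    cases hsj : s ⟨i + 1, hi⟩ with
    | left => exact absurd rfl (hcycle i _ hsi hsj)
    | _ => simp only [fanRank, hsi, hsj]; omega

theorem isParentMap_fanParent_iff {s : Fin n → FanDir} :
    (fanGraph n).IsParentMap none (fanParent s) ↔ IsFanCode true s := by
  constructor
  · intro hp
    have hadj (i : Fin n) := fanGraph_adj_fanStep.1 (hp.adj (some i) (Option.some_ne_none i))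
    refine ⟨fun i hi => (hadj i).2 hi, fun _ i hi => (hadj i).1 hi, fun i j hi hj hij => ?_⟩
    apply hp.apply_apply_ne (Option.some_ne_none i)
    simp [fanParent, hi, hj, fanStep_right hij, fanStep_left hij]
  · intro hs
    refine ⟨rfl, ?_, fanRank s, ?_⟩
    · rintro (_ | i) h
      · contradiction
      · exact fanGraph_adj_fanStep.2 ⟨fun hi => hs.2.1 rfl i hi, fun hi => hs.1 i hi⟩
    · rintro (_ | i) h
      · contradiction
      · exact fanRank_fanParent_lt hs i

theorem card_isFanCode_eq_card_isParentMap :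
    Nat.card {s : Fin n → FanDir // IsFanCode true s} =
      Nat.card {p // (fanGraph n).IsParentMap none p} := by
  refine Nat.card_eq_of_bijective (fun s => ⟨fanParent s.1, isParentMap_fanParent_iff.2 s.2⟩)
    ⟨?_, ?_⟩
  · rintro ⟨s, hs⟩ ⟨s', hs'⟩ h
    have hp := isParentMap_fanParent_iff.2 hs
    have hp' := isParentMap_fanParent_iff.2 hs'
    ext i : 2
    exact fanStep_inj (hp.adj (some i) (Option.some_ne_none i))
      (hp'.adj (some i) (Option.some_ne_none i)) (congrFun (congrArg Subtype.val h) (some i))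
  · rintro ⟨p, hp⟩
    choose s hs using fun i => exists_fanStep_eq (hp.adj (some i) (Option.some_ne_none i))
    have hps : fanParent s = p := by
      funext v
      cases v with
      | none => exact hp.map_root.symm
      | some i => exact hs i
    exact ⟨⟨s, isParentMap_fanParent_iff.1 (hps ▸ hp)⟩, Subtype.ext hps⟩

end Fan

theorem fan_spanning_trees (n : ℕ) (hn : 1 ≤ n) :
    Nat.card {H : (fanGraph n).Subgraph // H.IsSpanning ∧ H.coe.IsTree} = Nat.fib (2 * n) := by
  obtain ⟨m, rfl⟩ : ∃ m, n = m + 1 := ⟨n - 1, by omega⟩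
  rw [SimpleGraph.card_isSpanning_isTree_eq_card_isTree_le,
    SimpleGraph.card_isTree_le_eq_card_isParentMap _ none, ← card_isFanCode_eq_card_isParentMap,
    (card_isFanCode m).1, mul_add, mul_one]
end
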